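/- arXiv:2411.15391 — 6 statements merged into one kernel-verified Lean document; each statement's English description precedes it below -/
import Mathlib

section
/- Let r ≥ 1 and φ ∈ ℝ, and let A = (r·cos φ, r·sin φ) be the point with polar coordinates (r, φ). Then for every t ∈ ℝ with |t − φ| ≤ arccos(1/r), the point A inspects P_t, i.e., for all s ∈ [0,1], ‖(1−s)·A + s·P_t‖ ≥ 1. -/
/-!
`A` lies in the closed half-plane `⟪x, P_t⟫ ≥ 1` bounded by the tangent line to the unit circle
at `P_t`, because `⟪A, P_t⟫ = r cos (t - φ) ≥ r · (1 / r)`. That half-plane is convex, contains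
`P_t`, and is disjoint from the open unit disk by Cauchy–Schwarz, so the whole segment `[A, P_t]`
avoids the disk.
-/

open Real Set

/-- The point of the unit circle at angle `φ`. -/
noncomputable def Ppt (φ : ℝ) : EuclideanSpace ℝ (Fin 2) := !₂[Real.cos φ, Real.sin φ]

/-- `A` inspects the perimeter point `P_φ` if no convex combination of `A` and `P_φ`
lies in the open unit disk. -/
def Inspects (A : EuclideanSpace ℝ (Fin 2)) (φ : ℝ) : Prop :=
  ∀ s ∈ Set.Icc (0:ℝ) 1, 1 ≤ ‖(1 - s) • A + s • Ppt φ‖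

open scoped RealInnerProductSpace

section TangentHalfSpace

variable {E : Type*} [NormedAddCommGroup E] [InnerProductSpace ℝ E]

theorem one_le_norm_of_one_le_inner {x p : E} (hp : ‖p‖ = 1) (h : 1 ≤ ⟪x, p⟫) : 1 ≤ ‖x‖ :=
  calc 1 ≤ ⟪x, p⟫ := h
    _ ≤ ‖x‖ * ‖p‖ := real_inner_le_norm x p
    _ = ‖x‖ := by rw [hp, mul_one]

theorem one_le_inner_convexCombination {a p : E} (hp : ‖p‖ = 1) (ha : 1 ≤ ⟪a, p⟫) {s : ℝ}
    (hs : s ∈ Icc (0 : ℝ) 1) : 1 ≤ ⟪(1 - s) • a + s • p, p⟫ := by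
  have hpp : ⟪p, p⟫ = 1 := by rw [real_inner_self_eq_norm_sq, hp, one_pow]
  rw [inner_add_left, real_inner_smul_left, real_inner_smul_left, hpp]
  nlinarith [hs.1, hs.2]

end TangentHalfSpace

theorem norm_Ppt (t : ℝ) : ‖Ppt t‖ = 1 := by
  rw [EuclideanSpace.norm_eq, Fin.sum_univ_two]
  simp [Ppt]

theorem inspects_of_one_le_inner {A : EuclideanSpace ℝ (Fin 2)} {t : ℝ} (h : 1 ≤ ⟪A, Ppt t⟫) :
    Inspects A t := fun _ hs =>
  one_le_norm_of_one_le_inner (norm_Ppt t) (one_le_inner_convexCombination (norm_Ppt t) h hs)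

theorem inner_polar_Ppt (r φ t : ℝ) :
    ⟪(!₂[r * cos φ, r * sin φ] : EuclideanSpace ℝ (Fin 2)), Ppt t⟫ = r * cos (t - φ) := by
  simp only [Ppt, EuclideanSpace.inner_eq_star_dotProduct, dotProduct, Fin.sum_univ_two,
    star_trivial, Matrix.cons_val_zero, Matrix.cons_val_one, Matrix.cons_val_fin_one, cos_sub]
  ring

theorem one_le_mul_cos_of_abs_le_arccos {r θ : ℝ} (hr : 1 ≤ r) (hθ : |θ| ≤ arccos (1 / r)) :
    1 ≤ r * cos θ := by
  have hr0 : 0 < r := one_pos.trans_le hr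
  have hcos : 1 / r ≤ cos θ :=
    calc 1 / r = cos (arccos (1 / r)) :=
          (cos_arccos (by linarith [one_div_pos.mpr hr0]) ((div_le_one hr0).mpr hr)).symm
      _ ≤ cos |θ| := cos_le_cos_of_nonneg_of_le_pi (abs_nonneg θ) (arccos_le_pi _) hθ
      _ = cos θ := cos_abs θ
  calc 1 = r * (1 / r) := by field_simp
    _ ≤ r * cos θ := mul_le_mul_of_nonneg_left hcos hr0.le

theorem point_at_polar_coordinates_inspects (r φ : ℝ) (hr : 1 ≤ r) (t : ℝ)
    (ht : |t - φ| ≤ Real.arccos (1 / r)) :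
    Inspects (!₂[r * Real.cos φ, r * Real.sin φ] : EuclideanSpace ℝ (Fin 2)) t := by
  apply inspects_of_one_le_inner
  rw [inner_polar_Ppt]
  exact one_le_mul_cos_of_abs_le_arccos hr ht
end

section
/- As n → ∞ (over the positive integers), n²·( (n/(2π))·log((1 + sin(π/n))/(1 − sin(π/n))) − 1 ) tends to π²/6. In particular, the average-case inspection cost bound (n/(2π))·log((1 + sin(π/n))/(1 − sin(π/n))) for n agents equals 1 + π²/(6n²) + o(1/n²) asymptotically. -/
/-!
Write `x = π / n`. Since `(1/2) log ((1 + sin x) / (1 - sin x)) = artanh (sin x)`, the sequence equals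
`π² (artanh (sin x) - x) / x³`. The function `artanh ∘ sin` (the inverse Gudermannian) has derivative
`1 / cos x`, so one application of L'Hôpital's rule leaves `(1 - cos x) / (3 x² cos x)`, which tends
to `1/6` because `1 - cos x = (x² / 2) sinc (x / 2)²`.
-/

open Real Filter Set Topology

namespace Real

theorem hasDerivAt_artanh {x : ℝ} (hx : x ∈ Ioo (-1) 1) :
    HasDerivAt artanh (1 / (1 - x ^ 2)) x := by
  have hplus := ((hasDerivAt_id x).const_add 1).log (by simp; linarith [hx.1])
  have hminus := ((hasDerivAt_id x).const_sub 1).log (by simp; linarith [hx.2])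
  have hlog := (hplus.sub hminus).const_mul (1 / 2)
  have h₁ : 1 + x ≠ 0 := by linarith [hx.1]
  have h₂ : 1 - x ≠ 0 := by linarith [hx.2]
  rw [show 1 - x ^ 2 = (1 + x) * (1 - x) by ring]
  refine (hlog.congr_deriv (by simp only [id]; field_simp; ring)).congr_of_eventuallyEq ?_
  filter_upwards [isOpen_Ioo.mem_nhds hx] with y hy
  rw [artanh_eq_half_log (Ioo_subset_Icc_self hy), log_div (by linarith [hy.1]) (by linarith [hy.2])]
  rfl

theorem hasDerivAt_artanh_sin {x : ℝ} (hx : cos x ≠ 0) :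
    HasDerivAt (fun y => artanh (sin y)) (1 / cos x) x := by
  have hsin : sin x ∈ Ioo (-1) 1 := by
    rw [mem_Ioo, ← abs_lt, ← sq_lt_one_iff_abs_lt_one, sin_sq]
    linarith [sq_pos_of_ne_zero hx]
  refine ((hasDerivAt_artanh hsin).comp x (hasDerivAt_sin x)).congr_deriv ?_
  rw [← cos_sq']
  field_simp

theorem log_one_add_sin_div_one_sub_sin (x : ℝ) :
    log ((1 + sin x) / (1 - sin x)) = 2 * artanh (sin x) := by
  rw [artanh_eq_half_log ⟨neg_one_le_sin x, sin_le_one x⟩]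
  ring

theorem one_sub_cos_eq_mul_sinc_sq (x : ℝ) : 1 - cos x = x ^ 2 / 2 * sinc (x / 2) ^ 2 := by
  obtain ⟨y, rfl⟩ : ∃ y, x = 2 * y := ⟨x / 2, by ring⟩
  rcases eq_or_ne y 0 with rfl | hy
  · simp
  rw [mul_div_cancel_left₀ y two_ne_zero, sinc_of_ne_zero hy, cos_two_mul]
  have := sin_sq_add_cos_sq y
  field_simp
  linarith

theorem tendsto_one_sub_cos_div_sq :
    Tendsto (fun x => (1 - cos x) / x ^ 2) (𝓝[≠] 0) (𝓝 (1 / 2)) := by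
  have hcont : Tendsto (fun x => sinc (x / 2) ^ 2 / 2) (𝓝 0) (𝓝 (1 / 2)) := by
    simpa using ((continuous_sinc.comp (continuous_id.div_const 2)).pow 2 |>.div_const 2).tendsto 0
  refine (hcont.mono_left nhdsWithin_le_nhds).congr' ?_
  filter_upwards [self_mem_nhdsWithin] with x hx
  rw [one_sub_cos_eq_mul_sinc_sq]
  field_simp [show x ≠ 0 from hx]

theorem tendsto_artanh_sin_sub_self_div_cube :
    Tendsto (fun x => (artanh (sin x) - x) / x ^ 3) (𝓝[≠] 0) (𝓝 (1 / 6)) := by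
  have hcos : ∀ᶠ x in 𝓝 (0 : ℝ), cos x ≠ 0 :=
    continuous_cos.continuousAt.eventually_ne (by simp)
  refine HasDerivAt.lhopital_zero_nhdsNE (f' := fun x => 1 / cos x - 1) (g' := fun x => 3 * x ^ 2)
    ?_ ?_ ?_ ?_ ?_ ?_
  · filter_upwards [nhdsWithin_le_nhds hcos] with x hx
    exact (hasDerivAt_artanh_sin hx).sub (hasDerivAt_id x)
  · exact Eventually.of_forall fun x => by simpa using hasDerivAt_pow 3 x
  · filter_upwards [self_mem_nhdsWithin] with x hx
    simpa using hx
  · have h : ContinuousAt (fun x => artanh (sin x) - x) 0 :=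
      ((hasDerivAt_artanh_sin (by simp)).sub (hasDerivAt_id 0)).continuousAt
    simpa using h.tendsto.mono_left nhdsWithin_le_nhds
  · simpa using ((continuous_pow 3).tendsto (0 : ℝ)).mono_left nhdsWithin_le_nhds
  · have h := tendsto_one_sub_cos_div_sq.div
      (((continuous_cos.tendsto 0).const_mul 3).mono_left nhdsWithin_le_nhds) (by simp)
    rw [cos_zero] at h
    norm_num at h
    refine h.congr' ?_
    filter_upwards [nhdsWithin_le_nhds hcos] with x hx
    simp only [Pi.div_apply]
    field_simp

end Real

theorem average_cost_asymptotics :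
    Tendsto (fun n : ℕ =>
        (n:ℝ)^2 * ((n/(2*π)) * Real.log ((1 + Real.sin (π/n)) / (1 - Real.sin (π/n))) - 1))
      atTop (nhds (π^2/6)) := by
  have hx : Tendsto (fun n : ℕ => π / n) atTop (𝓝[≠] 0) :=
    tendsto_nhdsWithin_of_tendsto_nhds_of_eventually_within _
      (tendsto_const_div_atTop_nhds_zero_nat π)
      ((eventually_ne_atTop 0).mono fun n hn => by simp [pi_ne_zero, hn])
  have h := (tendsto_artanh_sin_sub_self_div_cube.comp hx).const_mul (π ^ 2)
  rw [mul_one_div] at h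
  refine h.congr' ((eventually_ne_atTop 0).mono fun n hn => ?_)
  have hn : (n : ℝ) ≠ 0 := by exact_mod_cast hn
  simp only [Function.comp_apply, log_one_add_sin_div_one_sub_sin]
  field_simp
end

section
/- For every c ∈ [π/2, 2π/3]: 1/sin(c/2 + π/4) + tan(c/2 − π/4) + 1 ≥ 1/cos(c/2). (Equivalently, the optimal Type-2 curve length 1 + 1/sin(c/2 + π/4) + tan(c/2 − π/4) is at least the optimal Type-1 curve length 1/cos(c/2) on this range of arc lengths c.) -/
/-!
With `t = c/2 - π/4 ∈ [0, π/12]` we have `sin (c/2 + π/4) = cos t`, and after clearing the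
positive denominators `cos t` and `cos (t + π/4) = (cos t - sin t)/√2` the inequality becomes
`√2 cos t ≤ (1 + sin t + cos t)(cos t - sin t) = cos t - sin t + cos 2t`. This holds because
`(√2 - 1) cos t + sin t ≤ √2 - 1 + π/12 < √3/2 ≤ cos 2t`.
-/

open Real

lemma sqrt_two_mul_cos_le_cos_sub_sin_add_cos_two_mul {t : ℝ} (ht₀ : 0 ≤ t) (ht₁ : t ≤ π / 12) :
    √2 * cos t ≤ cos t - sin t + cos (2 * t) := by
  have hsin : sin t ≤ t := sin_le ht₀
  have hcos_le : cos t ≤ 1 := cos_le_one t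
  have hcos_nonneg : 0 ≤ cos t :=
    cos_nonneg_of_neg_pi_div_two_le_of_le (by linarith [pi_pos]) (by linarith [pi_pos])
  have hcos_two : √3 / 2 ≤ cos (2 * t) := by
    rw [← cos_pi_div_six]
    exact cos_le_cos_of_nonneg_of_le_pi (by linarith) (by linarith [pi_pos]) (by linarith)
  have hsqrt2 : √2 < 3 / 2 := by rw [sqrt_lt' (by norm_num)]; norm_num
  have hsqrt3 : 17 / 10 < √3 := by rw [lt_sqrt (by norm_num)]; norm_num
  nlinarith [pi_lt_d2]

lemma one_div_cos_add_pi_div_four_le {t : ℝ} (ht₀ : 0 ≤ t) (ht₁ : t ≤ π / 12) :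
    1 / cos (t + π / 4) ≤ 1 / cos t + tan t + 1 := by
  have hcos : 0 < cos t := cos_pos_of_mem_Ioo ⟨by linarith [pi_pos], by linarith [pi_pos]⟩
  have hcos_add : 0 < cos (t + π / 4) :=
    cos_pos_of_mem_Ioo ⟨by linarith [pi_pos], by linarith [pi_pos]⟩
  have hexpand : √2 * cos (t + π / 4) = cos t - sin t := by
    rw [cos_add, cos_pi_div_four, sin_pi_div_four]
    ring_nf
    rw [sq_sqrt zero_le_two]
    ring
  have hproduct : √2 * ((1 + sin t + cos t) * cos (t + π / 4)) = cos t - sin t + cos (2 * t) := by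
    rw [cos_two_mul', ← mul_left_comm, hexpand]
    ring
  rw [tan_eq_sin_div_cos, ← add_div, div_add_one hcos.ne', div_le_div_iff₀ hcos_add hcos, one_mul]
  refine le_of_mul_le_mul_left ?_ (sqrt_pos.2 zero_lt_two)
  rw [hproduct]
  exact sqrt_two_mul_cos_le_cos_sub_sin_add_cos_two_mul ht₀ ht₁

theorem type2_ge_type1_first_range (c : ℝ) (hc : c ∈ Set.Icc (π/2) (2*π/3)) :
    1 / Real.cos (c/2) ≤ 1 / Real.sin (c/2 + π/4) + Real.tan (c/2 - π/4) + 1 := by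
  obtain ⟨hc₀, hc₁⟩ := hc
  have hsin : sin (c / 2 + π / 4) = cos (c / 2 - π / 4) := by
    rw [show c / 2 + π / 4 = c / 2 - π / 4 + π / 2 by ring, sin_add_pi_div_two]
  have h := one_div_cos_add_pi_div_four_le (t := c / 2 - π / 4) (by linarith) (by linarith)
  rwa [sub_add_cancel, ← hsin] at h
end

section
/- For every c ∈ [2π/3, 5π/6]: 1/sin(c/2 + π/4) + tan(c/2 − π/4) + 2·cos c ≥ 0. (Equivalently, the optimal Type-2 curve length 1 + 1/sin(c/2 + π/4) + tan(c/2 − π/4) is at least the optimal Type-1 curve length 1 − 2·cos c on this range of arc lengths c.) -/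
/-! Substituting `t = c/2 - π/4`, the expression becomes `1 / cos t + tan t - 2 sin 2t`, and
since `2 sin 2t cos t = sin t + sin 3t` this equals `(1 - sin 3t) / cos t`, which is nonnegative
whenever `cos t > 0`, i.e. for all `c ∈ (-π/2, 3π/2)`. -/

open Real

lemma one_div_cos_add_tan_sub_two_mul_sin_two_mul {t : ℝ} (ht : cos t ≠ 0) :
    1 / cos t + tan t - 2 * sin (2 * t) = (1 - sin (3 * t)) / cos t := by
  rw [tan_eq_sin_div_cos, sin_two_mul, sin_three_mul]
  field_simp
  linear_combination -4 * sin t * sin_sq_add_cos_sq t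

lemma one_div_cos_add_tan_sub_two_mul_sin_two_mul_nonneg {t : ℝ} (ht : 0 < cos t) :
    0 ≤ 1 / cos t + tan t - 2 * sin (2 * t) := by
  rw [one_div_cos_add_tan_sub_two_mul_sin_two_mul ht.ne']
  exact div_nonneg (sub_nonneg.mpr (sin_le_one _)) ht.le

theorem type2_ge_type1_second_range (c : ℝ) (hc : c ∈ Set.Icc (2*π/3) (5*π/6)) :
    0 ≤ 1 / Real.sin (c/2 + π/4) + Real.tan (c/2 - π/4) + 2 * Real.cos c := by
  obtain ⟨hc_lo, hc_hi⟩ := hc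
  set t := c/2 - π/4 with ht
  have hsin : sin (c/2 + π/4) = cos t := by
    rw [← sin_add_pi_div_two]; congr 1; ring
  have hcos : cos c = -sin (2 * t) := by
    rw [← cos_add_pi_div_two]; congr 1; ring
  have hcos_pos : 0 < cos t := cos_pos_of_mem_Ioo ⟨by linarith [pi_pos], by linarith [pi_pos]⟩
  rw [hsin, hcos]
  linarith [one_div_cos_add_tan_sub_two_mul_sin_two_mul_nonneg hcos_pos]
end

section
/- For every c ∈ [5π/6, 3π/2): 1/sin(c/2 + π/4) + tan(c/2 − π/4) ≥ √3 + c − 5π/6. (Equivalently, the optimal Type-1 curve length 1 + 1/sin(c/2 + π/4) + tan(c/2 − π/4) is at least the optimal Type-2 curve length 1 + √3 + c − 5π/6 on this range of arc lengths c.) -/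
/-!
Put `t = c/2 - π/4 ∈ [π/6, π/2)`. The right-hand side is `sec t + tan t = (1 + sin t)/cos t`,
whose derivative `(1 + sin t)/cos² t` is at least `2` as soon as `sin t ≥ 1/2`, because
`1 + s - 2(1 - s²) = (2s - 1)(s + 1)`. So `(1 + sin t)/cos t - 2t` increases on `[π/6, π/2)`,
and at `t = π/6` the inequality is an equality.
-/

open Real

lemma hasDerivAt_one_add_sin_div_cos {x : ℝ} (hx : cos x ≠ 0) :
    HasDerivAt (fun t => (1 + sin t) / cos t) ((1 + sin x) / cos x ^ 2) x := by
  refine (((hasDerivAt_sin x).const_add 1).div (hasDerivAt_cos x) hx).congr_deriv ?_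
  congr 1
  linear_combination sin_sq_add_cos_sq x

lemma two_le_one_add_sin_div_cos_sq {x : ℝ} (hsin : 1 / 2 ≤ sin x) (hcos : cos x ≠ 0) :
    2 ≤ (1 + sin x) / cos x ^ 2 := by
  rw [le_div_iff₀ (by positivity), cos_sq']
  nlinarith [neg_one_le_sin x]

lemma monotoneOn_one_add_sin_div_cos_sub_two_mul :
    MonotoneOn (fun t => (1 + sin t) / cos t - 2 * t) (Set.Ico (π / 6) (π / 2)) := by
  have hcos : ∀ x ∈ Set.Ico (π / 6) (π / 2), cos x ≠ 0 := fun x hx =>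
    (cos_pos_of_mem_Ioo ⟨by linarith [hx.1, pi_pos], hx.2⟩).ne'
  have hderiv : ∀ x ∈ Set.Ico (π / 6) (π / 2), HasDerivAt (fun t => (1 + sin t) / cos t - 2 * t)
      ((1 + sin x) / cos x ^ 2 - 2) x := fun x hx =>
    ((hasDerivAt_one_add_sin_div_cos (hcos x hx)).sub
      ((hasDerivAt_id' x).const_mul 2)).congr_deriv (by ring)
  refine monotoneOn_of_hasDerivWithinAt_nonneg (convex_Ico _ _)
    (fun x hx => (hderiv x hx).continuousAt.continuousWithinAt)
    (fun x hx => (hderiv x (interior_subset hx)).hasDerivWithinAt) fun x hx => ?_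
  rw [interior_Ico] at hx
  have hsin : 1 / 2 ≤ sin x := by
    rw [← sin_pi_div_six]
    exact sin_le_sin_of_le_of_le_pi_div_two (by linarith [pi_pos]) hx.2.le hx.1.le
  linarith [two_le_one_add_sin_div_cos_sq hsin (hcos x (Set.Ioo_subset_Ico_self hx))]

lemma one_add_sin_div_cos_pi_div_six : (1 + sin (π / 6)) / cos (π / 6) = √3 := by
  rw [sin_pi_div_six, cos_pi_div_six, div_eq_iff (by positivity)]
  nlinarith [sq_sqrt (show (0 : ℝ) ≤ 3 by norm_num)]

lemma sqrt_three_add_two_mul_sub_le_one_add_sin_div_cos {t : ℝ} (ht : t ∈ Set.Ico (π / 6) (π / 2)) :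
    √3 + 2 * (t - π / 6) ≤ (1 + sin t) / cos t := by
  have h := monotoneOn_one_add_sin_div_cos_sub_two_mul ⟨le_rfl, by linarith [pi_pos]⟩ ht ht.1
  simp only [one_add_sin_div_cos_pi_div_six] at h
  linarith

lemma one_div_sin_add_pi_div_two_add_tan (x : ℝ) :
    1 / sin (x + π / 2) + tan x = (1 + sin x) / cos x := by
  rw [sin_add_pi_div_two, tan_eq_sin_div_cos, add_div]

theorem type1_ge_type2_third_range (c : ℝ) (hc : c ∈ Set.Ico (5*π/6) (3*π/2)) :
    Real.sqrt 3 + c - 5*π/6 ≤ 1 / Real.sin (c/2 + π/4) + Real.tan (c/2 - π/4) := by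
  have ht : c / 2 - π / 4 ∈ Set.Ico (π / 6) (π / 2) := ⟨by linarith [hc.1], by linarith [hc.2]⟩
  have h := sqrt_three_add_two_mul_sub_le_one_add_sin_div_cos ht
  rw [← one_div_sin_add_pi_div_two_add_tan, show c / 2 - π / 4 + π / 2 = c / 2 + π / 4 by ring] at h
  linarith
end

section
/- For every θ ∈ [0, π/2): ∫₀^{2θ} 1/cos(θ − φ) dφ + ∫_{2θ}^{3π/2} (1/cos θ + tan θ + φ − 2θ) dφ + ∫_{3π/2}^{2π} (1/cos θ + tan θ + 3π/2 − 2θ + tan(φ/2 − 3π/4)) dφ = log((1 + sin θ)/(1 − sin θ)) + 2θ² − 4πθ + 2(π − θ)·tan θ + 2(π − θ)/cos θ + 15π²/8 + log 2. Consequently, the average inspection cost of the Isbell-type trajectory with deployment angle θ equals (1/(2π))·( log((1 + sin θ)/(1 − sin θ)) + 2θ² − 4πθ + 2(π − θ)·tan θ + 2(π − θ)/cos θ + 15π²/8 + log 2 ). -/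
open Real Set intervalIntegral

/-! Each summand has an elementary antiderivative: `log (1 + sin x) - log (cos x)` for `sec`,
`-log (cos x)` for `tan`, and a quadratic for the middle one. After the substitutions
`x = θ - φ` and `x = φ / 2 - 3π/4` all limits of integration lie in `(-π/2, π/2)`,
where `cos > 0`. -/

lemma hasDerivAt_log_one_add_sin_sub_log_cos {x : ℝ} (hx : x ∈ Ioo (-(π / 2)) (π / 2)) :
    HasDerivAt (fun y => log (1 + sin y) - log (cos y)) (1 / cos x) x := by
  have hcos : 0 < cos x := cos_pos_of_mem_Ioo hx
  have hsin : 0 < 1 + sin x := by nlinarith [sin_sq_add_cos_sq x, neg_one_le_sin x]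
  refine ((((hasDerivAt_sin x).const_add 1).log hsin.ne').sub
    ((hasDerivAt_cos x).log hcos.ne')).congr_deriv ?_
  field_simp
  nlinarith [sin_sq_add_cos_sq x]

lemma hasDerivAt_neg_log_cos {x : ℝ} (hx : cos x ≠ 0) :
    HasDerivAt (fun y => -log (cos y)) (tan x) x := by
  refine ((hasDerivAt_cos x).log hx).neg.congr_deriv ?_
  rw [tan_eq_sin_div_cos]
  ring

lemma integral_one_div_cos {a b : ℝ} (ha : a ∈ Ioo (-(π / 2)) (π / 2))
    (hb : b ∈ Ioo (-(π / 2)) (π / 2)) :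
    ∫ x in a..b, 1 / cos x =
      (log (1 + sin b) - log (cos b)) - (log (1 + sin a) - log (cos a)) := by
  have hsub : uIcc a b ⊆ Ioo (-(π / 2)) (π / 2) := ordConnected_Ioo.uIcc_subset ha hb
  refine integral_eq_sub_of_hasDerivAt
    (fun x hx => hasDerivAt_log_one_add_sin_sub_log_cos (hsub hx)) ?_
  refine ContinuousOn.intervalIntegrable fun x hx => ?_
  exact (continuousAt_const.div continuous_cos.continuousAt
    (cos_pos_of_mem_Ioo (hsub hx)).ne').continuousWithinAt

lemma integral_tan {a b : ℝ} (ha : a ∈ Ioo (-(π / 2)) (π / 2))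
    (hb : b ∈ Ioo (-(π / 2)) (π / 2)) :
    ∫ x in a..b, tan x = log (cos a) - log (cos b) := by
  have hsub : uIcc a b ⊆ Ioo (-(π / 2)) (π / 2) := ordConnected_Ioo.uIcc_subset ha hb
  rw [integral_eq_sub_of_hasDerivAt
    (fun x hx => hasDerivAt_neg_log_cos (cos_pos_of_mem_Ioo (hsub hx)).ne')
    (continuousOn_tan_Ioo.mono hsub).intervalIntegrable]
  ring

lemma integral_one_div_cos_neg_self {θ : ℝ} (hθ : θ ∈ Ioo (-(π / 2)) (π / 2)) :
    ∫ x in -θ..θ, 1 / cos x = log ((1 + sin θ) / (1 - sin θ)) := by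
  have hneg : -θ ∈ Ioo (-(π / 2)) (π / 2) := ⟨by linarith [hθ.2], by linarith [hθ.1]⟩
  have h_one_sub : 0 < 1 - sin θ := by
    nlinarith [sin_sq_add_cos_sq θ, sin_le_one θ, cos_pos_of_mem_Ioo hθ]
  have h_one_add : 0 < 1 + sin θ := by
    nlinarith [sin_sq_add_cos_sq θ, neg_one_le_sin θ, cos_pos_of_mem_Ioo hθ]
  rw [integral_one_div_cos hneg hθ, sin_neg, cos_neg, log_div h_one_add.ne' h_one_sub.ne']
  ring_nf

lemma integral_const_add_id (a b c : ℝ) :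
    ∫ x in a..b, (c + x) = c * (b - a) + (b ^ 2 - a ^ 2) / 2 := by
  rw [integral_add intervalIntegrable_const intervalIntegrable_id, integral_const, integral_id,
    smul_eq_mul, mul_comm]

lemma integral_const_add_tan_last_quarter (c : ℝ) :
    ∫ φ in (3 * π / 2)..(2 * π), (c + tan (φ / 2 - 3 * π / 4)) = c * (π / 2) + log 2 := by
  have hπ := pi_pos
  have hint : IntervalIntegrable (fun φ => tan (φ / 2 - 3 * π / 4)) MeasureTheory.volume
      (3 * π / 2) (2 * π) := by
    refine (continuousOn_tan_Ioo.comp (by fun_prop) fun φ hφ => ?_).intervalIntegrable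
    rw [uIcc_of_le (by linarith)] at hφ
    exact ⟨by linarith [hφ.1], by linarith [hφ.2]⟩
  rw [integral_add intervalIntegrable_const hint, integral_const, smul_eq_mul,
    integral_comp_div_sub tan two_ne_zero, smul_eq_mul,
    show 3 * π / 2 / 2 - 3 * π / 4 = 0 by ring, show 2 * π / 2 - 3 * π / 4 = π / 4 by ring,
    integral_tan ⟨by linarith, by linarith⟩ ⟨by linarith, by linarith⟩,
    cos_zero, cos_pi_div_four, log_one, log_div (by positivity) two_ne_zero, log_sqrt zero_le_two]
  ring

theorem isbell_type_average_cost (θ : ℝ) (hθ : θ ∈ Set.Ico 0 (π/2)) :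
    ((∫ φ in (0:ℝ)..(2*θ), 1 / Real.cos (θ - φ)) +
     (∫ φ in (2*θ)..(3*π/2), (1 / Real.cos θ + Real.tan θ + φ - 2*θ)) +
     (∫ φ in (3*π/2)..(2*π),
        (1 / Real.cos θ + Real.tan θ + 3*π/2 - 2*θ + Real.tan (φ/2 - 3*π/4))) =
      Real.log ((1 + Real.sin θ) / (1 - Real.sin θ)) + 2*θ^2 - 4*π*θ
        + 2*(π - θ) * Real.tan θ + 2*(π - θ) / Real.cos θ + 15*π^2/8 + Real.log 2) ∧
    (1/(2*π)) *
      ((∫ φ in (0:ℝ)..(2*θ), 1 / Real.cos (θ - φ)) +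
       (∫ φ in (2*θ)..(3*π/2), (1 / Real.cos θ + Real.tan θ + φ - 2*θ)) +
       (∫ φ in (3*π/2)..(2*π),
          (1 / Real.cos θ + Real.tan θ + 3*π/2 - 2*θ + Real.tan (φ/2 - 3*π/4)))) =
    (1/(2*π)) *
      (Real.log ((1 + Real.sin θ) / (1 - Real.sin θ)) + 2*θ^2 - 4*π*θ
        + 2*(π - θ) * Real.tan θ + 2*(π - θ) / Real.cos θ + 15*π^2/8 + Real.log 2) := by
  have hsec : ∫ φ in (0:ℝ)..(2*θ), 1 / cos (θ - φ) = log ((1 + sin θ) / (1 - sin θ)) := by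
    rw [integral_comp_sub_left (fun x => 1 / cos x), sub_zero, show θ - 2 * θ = -θ by ring]
    exact integral_one_div_cos_neg_self ⟨by linarith [hθ.1, pi_pos], hθ.2⟩
  have hlin : ∫ φ in (2*θ)..(3*π/2), (1 / cos θ + tan θ + φ - 2*θ) =
      (1 / cos θ + tan θ - 2*θ) * (3*π/2 - 2*θ) + ((3*π/2)^2 - (2*θ)^2) / 2 := by
    simp_rw [add_sub_right_comm _ _ (2 * θ)]
    exact integral_const_add_id _ _ _
  rw [hsec, hlin, integral_const_add_tan_last_quarter]
  constructor <;> ring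
end
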